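/- arXiv:1905.09341 — 4 statements merged into one kernel-verified Lean document; each statement's English description precedes it below -/
import Mathlib

section
/- The risk of bounded perception of player i equals L_i(m^i, u_{-i}) = (1/2) Σ_{j≠i} Σ_{k≠i} (1 - m_j^i)(1 - m_k^i) (1/R_ii^i) R_ij^i R_ik^i u_j u_k. Equivalently, with v_j := (1 - m_j^i) R_ij^i u_j, one has L_i = (Σ_j v_j)^2 / (2 R_ii^i). -/
/-! The real cost `J` is the quadratic `a ↦ ½ R a² - b a` with `b = r + Σ_j R_ij u_j`, minimized
at the true best response `b / R`; its excess at any `x` is `(R/2) (x - b/R)²`. The perceived best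
response misses `b / R` by exactly `-D / R` with `D = Σ_j (1 - m_j) R_ij u_j`, so the risk is
`D² / (2R)`, and expanding the square gives the double sum. -/

open Finset

lemma half_mul_sq_sub_mul_sub_at_vertex {K : Type*} [Field K] [NeZero (2 : K)] {R : K} (hR : R ≠ 0)
    (b x : K) :
    (1 / 2) * R * x ^ 2 - b * x - ((1 / 2) * R * (b / R) ^ 2 - b * (b / R)) =
      R / 2 * (x - b / R) ^ 2 := by
  field_simp
  ring

lemma sum_sum_mul_mul_eq_sq {ι α : Type*} [CommSemiring α] (s : Finset ι) (f : ι → α) (c : α) :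
    ∑ j ∈ s, ∑ k ∈ s, f j * f k * c = (∑ j ∈ s, f j) ^ 2 * c := by
  rw [sq, sum_mul_sum, sum_mul]
  simp only [sum_mul]

/-- The risk of bounded perception of player `i`,
`L_i = J^i(BR^i(perceived), u_{-i}) − J^i(BR^i(u_{-i}), u_{-i})`, equals
`(1/2) Σ_{j≠i} Σ_{k≠i} (1−m_j)(1−m_k)(1/R_ii) R_ij R_ik u_j u_k`, and
equivalently `(Σ_{j≠i} (1−m_j) R_ij u_j)² / (2 R_ii)`. -/
theorem stmt3 (N : ℕ) (i : Fin N) (Rii ri : ℝ) (hRii : 0 < Rii)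
    (Rij : Fin N → ℝ) (u : Fin N → ℝ) (m : Fin N → ℝ) :
    let J : ℝ → ℝ := fun a =>
      (1 / 2) * Rii * a ^ 2 - ri * a - ∑ j ∈ Finset.univ.erase i, Rij j * a * u j
    let BR : (Fin N → ℝ) → ℝ := fun v =>
      (1 / Rii) * (∑ j ∈ Finset.univ.erase i, Rij j * v j + ri)
    let L : ℝ := J (BR (fun j => m j * u j)) - J (BR u)
    L = (1 / 2) * ∑ j ∈ Finset.univ.erase i, ∑ k ∈ Finset.univ.erase i,
          (1 - m j) * (1 - m k) * (1 / Rii) * Rij j * Rij k * u j * u k ∧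
    L = (∑ j ∈ Finset.univ.erase i, (1 - m j) * Rij j * u j) ^ 2 / (2 * Rii) := by
  intro J BR L
  set b := ri + ∑ j ∈ univ.erase i, Rij j * u j
  set D := ∑ j ∈ univ.erase i, (1 - m j) * Rij j * u j
  have hJ : ∀ a, J a = (1 / 2) * Rii * a ^ 2 - b * a := fun a => by
    simp only [J, b, mul_right_comm _ a, ← sum_mul]
    ring
  have hBR : BR u = b / Rii := by
    simp only [BR, b]
    ring
  have hD : D = ∑ j ∈ univ.erase i, Rij j * u j - ∑ j ∈ univ.erase i, Rij j * (m j * u j) := by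
    rw [← sum_sub_distrib]
    exact sum_congr rfl fun j _ => by ring
  have hBR_perceived : BR (fun j => m j * u j) - b / Rii = -(D / Rii) := by
    simp only [BR, b, hD]
    ring
  have hL : L = D ^ 2 / (2 * Rii) := by
    change J _ - J _ = _
    rw [hJ, hJ, hBR, half_mul_sq_sub_mul_sub_at_vertex hRii.ne', hBR_perceived]
    field_simp
  refine ⟨hL.trans ?_, hL⟩
  calc D ^ 2 / (2 * Rii) = 1 / 2 * (D ^ 2 * (1 / Rii)) := by ring
    _ = _ := by
      rw [← sum_sum_mul_mul_eq_sq]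
      exact congrArg _ <| sum_congr rfl fun j _ => sum_congr rfl fun k _ => by ring
end

section
/- Let C = [0,1] ⊂ ℝ, let f₂(l) = α|l| with α > 0, and let f₃ = ι_C be the indicator function of C (0 on C, +∞ otherwise). Then for every λ > 0 and every x ∈ ℝ, prox_{λ(f₂ + f₃)}(x) = proj_C(prox_{λ f₂}(x)), i.e., the proximal operator of the sum equals the projection onto C composed with the soft-thresholding operator. -/
/-! On `[0, 1]` the objective `α|l| + (l - x)² / (2λ)` equals `(l - (x - λα))² / (2λ)` plus a
constant, so its minimizer over `[0, 1]` is the projection of `x - λα` onto `[0, 1]`. Projecting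
the soft-thresholding value gives the same point: both are `0` as soon as `x ≤ λα`. -/

section Projection

variable {K : Type*} [Field K] [LinearOrder K] [IsStrictOrderedRing K]

/-- The variational inequality characterizing the projection `max a (min t b)` onto `[a, b]`. -/
theorem sub_mul_sub_max_min_nonneg {a b t l : K} (hl : l ∈ Set.Icc a b) :
    0 ≤ (l - max a (min t b)) * (max a (min t b) - t) := by
  obtain ⟨hal, hlb⟩ := hl
  rcases le_total t a with hta | hat
  · rw [max_eq_left (min_le_of_left_le hta)]
    exact mul_nonneg (sub_nonneg.2 hal) (sub_nonneg.2 hta)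
  rcases le_total t b with htb | hbt
  · simp [min_eq_left htb, max_eq_right hat]
  · rw [min_eq_right hbt, max_eq_right (hal.trans hlb)]
    exact mul_nonneg_of_nonpos_of_nonpos (sub_nonpos.2 hlb) (sub_nonpos.2 hbt)

theorem sq_sub_max_min_lt {a b t l : K} (hl : l ∈ Set.Icc a b) (hne : l ≠ max a (min t b)) :
    (max a (min t b) - t) ^ 2 < (l - t) ^ 2 := by
  set q := max a (min t b)
  have hvar : 0 ≤ (l - q) * (q - t) := sub_mul_sub_max_min_nonneg hl
  have hpos : 0 < (l - q) ^ 2 := sq_pos_of_ne_zero (sub_ne_zero.2 hne)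
  calc (q - t) ^ 2 < (l - q) ^ 2 + 2 * ((l - q) * (q - t)) + (q - t) ^ 2 := by linarith
    _ = (l - t) ^ 2 := by ring

end Projection

/-- Soft thresholding at level `c`, the proximal map of `c |·|`. -/
def softThreshold (c x : ℝ) : ℝ := max (x - c) 0 - max (-x - c) 0

theorem max_zero_min_softThreshold {c : ℝ} (hc : 0 ≤ c) (x b : ℝ) :
    max 0 (min (softThreshold c x) b) = max 0 (min (x - c) b) := by
  unfold softThreshold
  rcases le_total (x - c) 0 with hxc | hxc
  · have hs : max (x - c) 0 - max (-x - c) 0 ≤ 0 := by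
      rw [max_eq_right hxc]; linarith [le_max_right (-x - c) 0]
    rw [max_eq_left (min_le_of_left_le hs), max_eq_left (min_le_of_left_le hxc)]
  · rw [max_eq_left hxc, max_eq_right (by linarith : -x - c ≤ 0), sub_zero]

theorem mul_abs_add_sq_eq {α lam x l : ℝ} (hlam : lam ≠ 0) (hl : 0 ≤ l) :
    α * |l| + 1 / (2 * lam) * (l - x) ^ 2
      = ((l - (x - lam * α)) ^ 2 + (2 * lam * α * x - (lam * α) ^ 2)) / (2 * lam) := by
  rw [abs_of_nonneg hl]
  field_simp
  ring

/-- For `C = [0,1]`, `f₂(l) = α|l|` (`α > 0`), `f₃ = ι_C`, and any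
`λ > 0`, `x ∈ ℝ`: the proximal point of `f₂ + f₃` at `x` — i.e. the unique
minimizer of `α|l| + (1/(2λ))(l−x)²` over `C` — equals the projection onto `C`
of the soft-thresholding value `prox_{λ f₂}(x)`. -/
theorem stmt7 (α lam x : ℝ) (hα : 0 < α) (hlam : 0 < lam) :
    let f : ℝ → ℝ := fun l => α * |l| + (1 / (2 * lam)) * (l - x) ^ 2
    let s : ℝ := max (x - lam * α) 0 - max (-x - lam * α) 0  -- prox_{λ f₂}(x)
    let p : ℝ := max 0 (min s 1)                             -- proj_C (s)
    p ∈ Set.Icc (0 : ℝ) 1 ∧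
    (∀ l ∈ Set.Icc (0 : ℝ) 1, l ≠ p → f p < f l) := by
  intro f s p
  have hp : p = max 0 (min (x - lam * α) 1) :=
    max_zero_min_softThreshold (mul_pos hlam hα).le x 1
  have hp0 : 0 ≤ p := le_max_left _ _
  refine ⟨⟨hp0, hp ▸ max_le zero_le_one (min_le_right _ _)⟩, fun l hl hne => ?_⟩
  have hsq := sq_sub_max_min_lt hl (hp ▸ hne)
  rw [← hp] at hsq
  simp only [f, mul_abs_add_sq_eq hlam.ne' hp0, mul_abs_add_sq_eq hlam.ne' hl.1]
  gcongr
end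

section
/- Let λ > 0 and L > 0 with λ < 1/L. Suppose f₁ is differentiable with L-Lipschitz gradient and v minimizes x ↦ ⟨∇f₁(x_k), x − x_k⟩ + (1/(2λ))‖x − x_k‖² + g(x) over a set containing x_k, where g is proper. Then f₁(v) + g(v) ≤ f₁(x_k) + g(x_k) − (1/(2λ) − L/2)‖v − x_k‖². -/
open scoped RealInnerProductSpace

section DescentLemma

variable {E : Type*} [NormedAddCommGroup E] [InnerProductSpace ℝ E] [CompleteSpace E]

theorem HasGradientAt.hasDerivAt_comp_add_smul {f : E → ℝ} {f' x d : E} {t : ℝ}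
    (hf : HasGradientAt f f' (x + t • d)) :
    HasDerivAt (fun s : ℝ => f (x + s • d)) ⟪f', d⟫ t := by
  have hline : HasDerivAt (fun s : ℝ => x + s • d) d t := by
    simpa using ((hasDerivAt_id t).smul_const d).const_add x
  have h := hf.hasFDerivAt.comp_hasDerivAt t hline
  simp only [InnerProductSpace.toDual_apply_apply] at h
  exact h

/-- Along `x + t • (y - x)`, `f` minus its quadratic upper model has nonpositive derivative,
since the gradient moves by at most `L t ‖y - x‖`. -/
theorem le_add_inner_add_of_lipschitz_gradient {f : E → ℝ} {f' : E → E} {L : ℝ}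
    (hf : ∀ x, HasGradientAt f (f' x) x) (hlip : ∀ x y, ‖f' x - f' y‖ ≤ L * ‖x - y‖)
    (x y : E) :
    f y ≤ f x + ⟪f' x, y - x⟫ + L / 2 * ‖y - x‖ ^ 2 := by
  set d := y - x
  let φ : ℝ → ℝ := fun t => f (x + t • d) - t * ⟪f' x, d⟫ - L / 2 * t ^ 2 * ‖d‖ ^ 2
  let φ' : ℝ → ℝ := fun t => ⟪f' (x + t • d) - f' x, d⟫ - L * t * ‖d‖ ^ 2
  have hφ : ∀ t, HasDerivAt φ (φ' t) t := by
    intro t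
    have hderiv := (((hf (x + t • d)).hasDerivAt_comp_add_smul).sub
      ((hasDerivAt_id t).mul_const ⟪f' x, d⟫)).sub
      (((hasDerivAt_pow 2 t).const_mul (L / 2)).mul_const (‖d‖ ^ 2))
    refine hderiv.congr_deriv ?_
    simp only [φ', inner_sub_left]
    ring
  have hφ'_nonpos : ∀ t ∈ interior (Set.Ici (0 : ℝ)), φ' t ≤ 0 := by
    intro t ht
    rw [interior_Ici] at ht
    have hstep : ‖f' (x + t • d) - f' x‖ ≤ L * (t * ‖d‖) := by
      simpa [norm_smul, abs_of_pos (Set.mem_Ioi.mp ht)] using hlip (x + t • d) x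
    have hinner := (real_inner_le_norm (f' (x + t • d) - f' x) d).trans
      (mul_le_mul_of_nonneg_right hstep (norm_nonneg d))
    simp only [φ']
    nlinarith
  have hanti : AntitoneOn φ (Set.Ici 0) :=
    antitoneOn_of_hasDerivWithinAt_nonpos (convex_Ici 0)
      (fun t _ => (hφ t).continuousAt.continuousWithinAt)
      (fun t _ => (hφ t).hasDerivWithinAt) hφ'_nonpos
  have hφ_one_le : φ 1 ≤ φ 0 := hanti Set.self_mem_Ici (by norm_num) zero_le_one
  simp only [φ, one_smul, zero_smul, add_zero, d, add_sub_cancel] at hφ_one_le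
  linarith

end DescentLemma

open scoped RealInnerProductSpace in
theorem stmt15_general {E : Type*} [NormedAddCommGroup E] [InnerProductSpace ℝ E] [CompleteSpace E]
    (f₁ : E → ℝ) (gradf : E → E) (g : E → ℝ) (L lam : ℝ)
    (hgrad : ∀ x, HasGradientAt f₁ (gradf x) x)
    (hlip : ∀ x y, ‖gradf x - gradf y‖ ≤ L * ‖x - y‖)
    (s : Set E) (xk v : E) (hxk : xk ∈ s)
    (hmin : ∀ x ∈ s,
      ⟪gradf xk, v - xk⟫ + (1 / (2 * lam)) * ‖v - xk‖ ^ 2 + g v ≤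
      ⟪gradf xk, x - xk⟫ + (1 / (2 * lam)) * ‖x - xk‖ ^ 2 + g x) :
    f₁ v + g v ≤ f₁ xk + g xk - (1 / (2 * lam) - L / 2) * ‖v - xk‖ ^ 2 := by
  have hdescent := le_add_inner_add_of_lipschitz_gradient hgrad hlip xk v
  have hmodel := hmin xk hxk
  simp only [sub_self, inner_zero_right, norm_zero] at hmodel
  linarith

open scoped RealInnerProductSpace in
/-- Descent inequality for the proximal step. If `f₁` has an
`L`-Lipschitz gradient, `0 < λ < 1/L`, and `v` minimizes
`x ↦ ⟨∇f₁(x_k), x − x_k⟩ + (1/(2λ))‖x − x_k‖² + g(x)` over a set `s` containing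
`x_k`, then `f₁(v) + g(v) ≤ f₁(x_k) + g(x_k) − (1/(2λ) − L/2)‖v − x_k‖²`. -/
theorem stmt15 {E : Type*} [NormedAddCommGroup E] [InnerProductSpace ℝ E] [CompleteSpace E]
    (f₁ : E → ℝ) (gradf : E → E) (g : E → ℝ) (L lam : ℝ)
    (hL : 0 < L) (hlam0 : 0 < lam) (hlam : lam < 1 / L)
    (hgrad : ∀ x, HasGradientAt f₁ (gradf x) x)
    (hlip : ∀ x y, ‖gradf x - gradf y‖ ≤ L * ‖x - y‖)
    (s : Set E) (xk v : E) (hxk : xk ∈ s) (hv : v ∈ s)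
    (hmin : ∀ x ∈ s,
      ⟪gradf xk, v - xk⟫ + (1 / (2 * lam)) * ‖v - xk‖ ^ 2 + g v ≤
      ⟪gradf xk, x - xk⟫ + (1 / (2 * lam)) * ‖x - xk‖ ^ 2 + g x) :
    f₁ v + g v ≤ f₁ xk + g xk - (1 / (2 * lam) - L / 2) * ‖v - xk‖ ^ 2 :=
  stmt15_general f₁ gradf g L lam hgrad hlip s xk v hxk hmin
end

section
/- Let {r_k} be a nonincreasing sequence of positive reals, θ ∈ (0, 1/2), κ > 0, d₁ > 0, satisfying 1 ≤ d₁ κ² r_k^{2(θ−1)} (r_{k−1} − r_k) for all k > k₀. Then there exists d₂ > 0 (depending on κ, θ, d₁, r_{k₀}) such that r_k ≤ (κ / (d₂ (k − k₀)(1 − 2θ)))^{1/(1−2θ)} for all k > k₀; in particular r_k → 0 at a sublinear polynomial rate. -/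
/-!
Put `β = 1 - 2θ`. The hypothesis says `r (k-1) - r k ≥ r k ^ (1 + β) / (d₁ κ²)`, and from it
`r k ^ (-β)` gains at least a fixed `c > 0` per step. If `r (k-1) ≤ 2 r k`, the tangent line
of the convex function `t ↦ t ^ (-β)` at `r (k-1)` (Bernoulli's inequality with exponent
`1 + β`) bounds the gain below by
`β r (k-1) ^ (-(1+β)) (r (k-1) - r k) ≥ β 2 ^ (-(1+β)) / (d₁ κ²)`. Otherwise
`r (k-1) ^ (-β) ≤ 2 ^ (-β) r k ^ (-β)`, and the gain is at least `(1 - 2 ^ (-β)) r k₀ ^ (-β)`.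
Telescoping gives `r k ^ (-β) ≥ c (k - k₀)`, that is `r k ≤ (c (k - k₀))⁻¹ ^ (1 / β)`.
-/

open Filter Topology

theorem mul_rpow_neg_mul_sub_le_rpow_neg_sub {β a b : ℝ} (hβ : 0 ≤ β) (hb : 0 < b)
    (hba : b ≤ a) :
    β * a ^ (-(1 + β)) * (a - b) ≤ b ^ (-β) - a ^ (-β) := by
  have ha : 0 < a := hb.trans_le hba
  have hbern : b ^ β * ((1 + β) * a - β * b) ≤ a * a ^ β := by
    have h := one_add_mul_self_le_rpow_one_add (s := a / b - 1) (by linarith [div_pos ha hb])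
      (p := 1 + β) (by linarith)
    rw [add_sub_cancel, Real.div_rpow ha.le hb.le, Real.rpow_add ha, Real.rpow_add hb,
      Real.rpow_one, Real.rpow_one, le_div_iff₀ (by positivity)] at h
    calc _ = (1 + (1 + β) * (a / b - 1)) * (b * b ^ β) := by field_simp; ring
      _ ≤ _ := h
  rw [Real.rpow_neg ha.le, Real.rpow_neg hb.le, Real.rpow_neg ha.le, Real.rpow_add ha,
    Real.rpow_one, ← sub_nonneg]
  calc (0 : ℝ) ≤ (a * a ^ β - b ^ β * ((1 + β) * a - β * b)) / (a * a ^ β * b ^ β) :=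
        div_nonneg (by linarith) (by positivity)
    _ = _ := by field_simp; ring

theorem rpow_neg_add_le_of_one_le_mul_sub {β K M a b c : ℝ} (hβ : 0 ≤ β) (hK : 0 < K)
    (hb : 0 < b) (hba : b ≤ a) (hbM : b ≤ M) (hgap : 1 ≤ K * b ^ (-(1 + β)) * (a - b))
    (hc₁ : c ≤ β * 2 ^ (-(1 + β)) / K) (hc₂ : c ≤ M ^ (-β) * (1 - 2 ^ (-β))) :
    a ^ (-β) + c ≤ b ^ (-β) := by
  have h2 : (0 : ℝ) ≤ 2 := zero_le_two
  rcases le_or_gt a (2 * b) with hclose | hfar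
  · have hgap' : 1 / K ≤ b ^ (-(1 + β)) * (a - b) := by
      rw [div_le_iff₀ hK]; linarith
    calc a ^ (-β) + c
        ≤ a ^ (-β) + β * 2 ^ (-(1 + β)) * (b ^ (-(1 + β)) * (a - b)) := by
          gcongr
          exact hc₁.trans (by rw [div_eq_mul_one_div]; gcongr)
      _ = a ^ (-β) + β * (2 * b) ^ (-(1 + β)) * (a - b) := by
          rw [Real.mul_rpow h2 hb.le]; ring
      _ ≤ a ^ (-β) + β * a ^ (-(1 + β)) * (a - b) := by
          gcongr ?_ + β * ?_ * _
          · linarith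
          exact Real.rpow_le_rpow_of_nonpos (hb.trans_le hba) hclose (by linarith)
      _ ≤ b ^ (-β) := by linarith [mul_rpow_neg_mul_sub_le_rpow_neg_sub hβ hb hba]
  · have hfar' : a ^ (-β) ≤ 2 ^ (-β) * b ^ (-β) := by
      rw [← Real.mul_rpow h2 hb.le]
      exact Real.rpow_le_rpow_of_nonpos (by positivity) hfar.le (by linarith)
    have hM : M ^ (-β) ≤ b ^ (-β) := Real.rpow_le_rpow_of_nonpos hb hbM (by linarith)
    have h2β : 2 ^ (-β) ≤ (1 : ℝ) :=
      Real.rpow_le_one_of_one_le_of_nonpos one_le_two (by linarith)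
    nlinarith

theorem add_mul_sub_le_of_add_le_succ {u : ℕ → ℝ} {c : ℝ} {k₀ : ℕ}
    (h : ∀ k, k₀ ≤ k → u k + c ≤ u (k + 1)) {k : ℕ} (hk : k₀ ≤ k) :
    u k₀ + c * ((k : ℝ) - k₀) ≤ u k := by
  induction k, hk using Nat.le_induction with
  | base => simp
  | succ k hk ih =>
    push_cast
    linarith [h k hk]

theorem le_inv_rpow_inv_of_le_rpow_neg {β t x : ℝ} (hβ : 0 < β) (ht : 0 < t) (hx : 0 < x)
    (h : t ≤ x ^ (-β)) : x ≤ t⁻¹ ^ β⁻¹ := by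
  rwa [Real.inv_rpow ht.le, ← Real.rpow_neg ht.le, ← inv_neg,
    Real.le_rpow_inv_iff_of_neg hx ht (neg_lt_zero.2 hβ)]

theorem tendsto_inv_mul_sub_rpow_atTop {c p : ℝ} (hc : 0 < c) (hp : 0 < p) (k₀ : ℕ) :
    Tendsto (fun k : ℕ ↦ (c * ((k : ℝ) - k₀))⁻¹ ^ p) atTop (𝓝 0) := by
  have h : Tendsto (fun k : ℕ ↦ c * ((k : ℝ) - k₀)) atTop atTop :=
    (tendsto_atTop_add_const_right _ _ tendsto_natCast_atTop_atTop).const_mul_atTop hc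
  simpa [Real.zero_rpow hp.ne'] using h.inv_tendsto_atTop.rpow_const (Or.inr hp.le)

theorem stmt16_general (r : ℕ → ℝ) (hmono : Antitone r) (hpos : ∀ k, 0 < r k)
    (θ κ d₁ : ℝ) (hθ1 : θ < 1 / 2) (hκ : 0 < κ) (hd₁ : 0 < d₁)
    (k₀ : ℕ)
    (hKL : ∀ k, k₀ < k →
      1 ≤ d₁ * κ ^ 2 * r k ^ (2 * (θ - 1)) * (r (k - 1) - r k)) :
    (∃ d₂ : ℝ, 0 < d₂ ∧ ∀ k, k₀ < k →
      r k ≤ (κ / (d₂ * ((k : ℝ) - (k₀ : ℝ)) * (1 - 2 * θ))) ^ (1 / (1 - 2 * θ))) ∧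
    Filter.Tendsto r Filter.atTop (nhds 0) := by
  set β := 1 - 2 * θ
  have hβ : 0 < β := by linarith
  set c := min (β * 2 ^ (-(1 + β)) / (d₁ * κ ^ 2)) (r k₀ ^ (-β) * (1 - 2 ^ (-β)))
  have hc : 0 < c := lt_min (div_pos (mul_pos hβ (by positivity)) (by positivity)) <|
    mul_pos (Real.rpow_pos_of_pos (hpos k₀) _) <|
      sub_pos.2 (Real.rpow_lt_one_of_one_lt_of_neg one_lt_two (neg_lt_zero.2 hβ))
  have hstep (k : ℕ) (hk : k₀ ≤ k) : r k ^ (-β) + c ≤ r (k + 1) ^ (-β) := by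
    have hgap := hKL (k + 1) (Nat.lt_succ_of_le hk)
    rw [Nat.add_sub_cancel, show 2 * (θ - 1) = -(1 + β) by ring] at hgap
    exact rpow_neg_add_le_of_one_le_mul_sub hβ.le (by positivity) (hpos _) (hmono k.le_succ)
      (hmono (hk.trans k.le_succ)) hgap (min_le_left _ _) (min_le_right _ _)
  have hbound (k : ℕ) (hk : k₀ < k) : r k ≤ (c * ((k : ℝ) - k₀))⁻¹ ^ (1 / β) := by
    have hN : (0 : ℝ) < (k : ℝ) - k₀ := sub_pos.2 (by exact_mod_cast hk)
    rw [one_div]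
    refine le_inv_rpow_inv_of_le_rpow_neg hβ (by positivity) (hpos k) ?_
    linarith [add_mul_sub_le_of_add_le_succ hstep hk.le, Real.rpow_nonneg (hpos k₀).le (-β)]
  refine ⟨⟨c * κ / β, by positivity, fun k hk ↦ ?_⟩, ?_⟩
  · have hN : (0 : ℝ) < (k : ℝ) - k₀ := sub_pos.2 (by exact_mod_cast hk)
    convert hbound k hk using 2
    field_simp
  · refine tendsto_of_tendsto_of_tendsto_of_le_of_le' tendsto_const_nhds
      (tendsto_inv_mul_sub_rpow_atTop hc (one_div_pos.2 hβ) k₀)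
      (.of_forall fun k ↦ (hpos k).le) ?_
    filter_upwards [eventually_gt_atTop k₀] with k hk using hbound k hk

/-- Rate extraction from the KL inequality. If `{r_k}` is a
nonincreasing sequence of positive reals with
`1 ≤ d₁ κ² r_k^{2(θ−1)} (r_{k−1} − r_k)` for all `k > k₀`, where `θ ∈ (0,1/2)`,
`κ > 0`, `d₁ > 0`, then there is `d₂ > 0` such that
`r_k ≤ (κ/(d₂ (k−k₀)(1−2θ)))^{1/(1−2θ)}` for all `k > k₀`; in particular
`r_k → 0`. -/
theorem stmt16 (r : ℕ → ℝ) (hmono : Antitone r) (hpos : ∀ k, 0 < r k)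
    (θ κ d₁ : ℝ) (hθ0 : 0 < θ) (hθ1 : θ < 1 / 2) (hκ : 0 < κ) (hd₁ : 0 < d₁)
    (k₀ : ℕ)
    (hKL : ∀ k, k₀ < k →
      1 ≤ d₁ * κ ^ 2 * r k ^ (2 * (θ - 1)) * (r (k - 1) - r k)) :
    (∃ d₂ : ℝ, 0 < d₂ ∧ ∀ k, k₀ < k →
      r k ≤ (κ / (d₂ * ((k : ℝ) - (k₀ : ℝ)) * (1 - 2 * θ))) ^ (1 / (1 - 2 * θ))) ∧
    Filter.Tendsto r Filter.atTop (nhds 0) :=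
  stmt16_general r hmono hpos θ κ d₁ hθ1 hκ hd₁ k₀ hKL
end
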